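/- Let α,γ,ε ∈ ℝ and let (m₁,m₂,m₃,p₁,p₂,p₃) and (m̃₁,m̃₂,m̃₃,p̃₁,p̃₂,p̃₃) in ℝ⁶ satisfy the dLT equations: m̃₁ − m₁ = ε(α−1)(m̃₂m₃ + m₂m̃₃) + εγ(p₂ + p̃₂), m̃₂ − m₂ = ε(1−α)(m̃₁m₃ + m₁m̃₃) − εγ(p₁ + p̃₁), m̃₃ = m₃, p̃₁ − p₁ = εα(p₂m̃₃ + p̃₂m₃) − ε(p₃m̃₂ + p̃₃m₂), p̃₂ − p₂ = ε(p₃m̃₁ + p̃₃m₁) − εα(p₁m̃₃ + p̃₁m₃), p̃₃ − p₃ = ε(p₁m̃₂ + p̃₁m₂ − p₂m̃₁ − p̃₂m₁). Set Δ₁ = 1 + ε²α(1−α)m₃² − ε²γp₃ and b₃ = ((2α−1)m₃ + ε²(α−1)m₃(m₁²+m₂²) + ε²γ(m₁p₁+m₂p₂))/(m₃Δ₁). Assume m₃ ≠ 0, Δ₁ ≠ 0, and Δ̃₁ = 1 + ε²α(1−α)m₃² − ε²γp̃₃ ≠ 0. Then (m̃₁p₁ − m₁p̃₁) + (m̃₂p₂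 − m₂p̃₂) + b₃(m̃₃p₃ − m₃p̃₃) = 0, and b₃ is a conserved quantity: b₃(m̃,p̃) = b₃(m,p). -/

import Mathlib

/-!
In complex coordinates `z = m₁ + i m₂`, `w = p₁ + i p₂` the first, second, fourth and fifth
equations form a 2 × 2 complex linear system for `(z̃, w̃)` whose determinant is
`δ = Δ₁ + i ε (2α - 1) m₃`. Cramer's rule, applied without dividing by `δ`, expresses `δ z̃` and
`δ w̃` through the old variables and `p̃₃`. Pair `δ z̃` with `w̄` and `δ w̃` with `z̄`: the real part
of `δ` gives `Δ₁` times the Wronskian, its imaginary part combines with the equation for `p̃₃`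
into `(2α - 1) m₃ (p₃ - p̃₃)`, and the Cramer right-hand sides supply the remaining terms, so that
`Δ₁ (W₁ + W₂) + N (p₃ - p̃₃) = 0` with `b₃ = N / (m₃ Δ₁)`. The first two equations alone give
`Ñ - N = -ε² γ (W₁ + W₂)`, and the two relations together say `Ñ Δ₁ = N Δ̃₁`.
-/

/-- The conserved quantity `b₃` of the Hirota–Kimura discretization dLT of the
Lagrange top. -/
noncomputable def dLTb3 (α γ ε m1 m2 m3 p1 p2 p3 : ℝ) : ℝ :=
  ((2 * α - 1) * m3 + ε ^ 2 * (α - 1) * m3 * (m1 ^ 2 + m2 ^ 2)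
      + ε ^ 2 * γ * (m1 * p1 + m2 * p2))
    / (m3 * (1 + ε ^ 2 * α * (1 - α) * m3 ^ 2 - ε ^ 2 * γ * p3))

structure IsDLTStep {R : Type*} [CommRing R]
    (α γ ε m1 m2 m3 p1 p2 p3 mt1 mt2 mt3 pt1 pt2 pt3 : R) : Prop where
  m1_eq : mt1 - m1 = ε * (α - 1) * (mt2 * m3 + m2 * mt3) + ε * γ * (p2 + pt2)
  m2_eq : mt2 - m2 = ε * (1 - α) * (mt1 * m3 + m1 * mt3) - ε * γ * (p1 + pt1)
  m3_eq : mt3 = m3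
  p1_eq : pt1 - p1 = ε * α * (p2 * mt3 + pt2 * m3) - ε * (p3 * mt2 + pt3 * m2)
  p2_eq : pt2 - p2 = ε * (p3 * mt1 + pt3 * m1) - ε * α * (p1 * mt3 + pt1 * m3)
  p3_eq : pt3 - p3 = ε * (p1 * mt2 + pt1 * m2 - p2 * mt1 - pt2 * m1)

section

variable {R : Type*} [CommRing R]

def dLTDelta (α γ ε m3 p3 : R) : R :=
  1 + ε ^ 2 * α * (1 - α) * m3 ^ 2 - ε ^ 2 * γ * p3

def dLTNum (α γ ε m1 m2 m3 p1 p2 : R) : R :=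
  (2 * α - 1) * m3 + ε ^ 2 * (α - 1) * m3 * (m1 ^ 2 + m2 ^ 2) + ε ^ 2 * γ * (m1 * p1 + m2 * p2)

theorem dLTb3_eq_dLTNum_div (α γ ε m1 m2 m3 p1 p2 p3 : ℝ) :
    dLTb3 α γ ε m1 m2 m3 p1 p2 p3 = dLTNum α γ ε m1 m2 m3 p1 p2 / (m3 * dLTDelta α γ ε m3 p3) :=
  rfl

namespace IsDLTStep

variable {α γ ε m1 m2 m3 p1 p2 p3 mt1 mt2 mt3 pt1 pt2 pt3 : R}
  (h : IsDLTStep α γ ε m1 m2 m3 p1 p2 p3 mt1 mt2 mt3 pt1 pt2 pt3)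
include h

theorem dLTDelta_mul_wronskian_add_dLTNum_mul_eq_zero :
    dLTDelta α γ ε m3 p3 * ((mt1 * p1 - m1 * pt1) + (mt2 * p2 - m2 * pt2))
      + dLTNum α γ ε m1 m2 m3 p1 p2 * (p3 - pt3) = 0 := by
  obtain ⟨hm1, hm2, hm3, hp1, hp2, hp3⟩ := h
  rw [hm3] at hm1 hm2 hp1 hp2
  unfold dLTDelta dLTNum
  -- the multipliers of the pairing: real and imaginary parts of
  -- `(1 + i ε α m₃) w̄ - i ε p₃ z̄` and `-(1 + i ε (α - 1) m₃) z̄ - i ε γ w̄`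
  linear_combination (p1 + ε * α * m3 * p2 - ε * p3 * m2) * hm1
    + (p2 - ε * α * m3 * p1 + ε * p3 * m1) * hm2
    - (m1 + ε * (α - 1) * m3 * m2 + ε * γ * p2) * hp1
    + (ε * (α - 1) * m3 * m1 + ε * γ * p1 - m2) * hp2 + (1 - 2 * α) * m3 * hp3

theorem dLTNum_sub_dLTNum :
    dLTNum α γ ε mt1 mt2 mt3 pt1 pt2 - dLTNum α γ ε m1 m2 m3 p1 p2
      = -(ε ^ 2 * γ) * ((mt1 * p1 - m1 * pt1) + (mt2 * p2 - m2 * pt2)) := by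
  obtain ⟨hm1, hm2, hm3, -, -, -⟩ := h
  rw [hm3] at hm1 hm2 ⊢
  unfold dLTNum
  linear_combination (ε ^ 2 * (α - 1) * m3 * (m1 + mt1) + ε ^ 2 * γ * (p1 + pt1)) * hm1
    + (ε ^ 2 * (α - 1) * m3 * (m2 + mt2) + ε ^ 2 * γ * (p2 + pt2)) * hm2

theorem dLTNum_mul_dLTDelta_eq :
    dLTNum α γ ε mt1 mt2 mt3 pt1 pt2 * dLTDelta α γ ε m3 p3
      = dLTNum α γ ε m1 m2 m3 p1 p2 * dLTDelta α γ ε m3 pt3 := by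
  have hΔ : dLTDelta α γ ε m3 p3 - dLTDelta α γ ε m3 pt3 = -(ε ^ 2 * γ) * (p3 - pt3) := by
    unfold dLTDelta; ring
  linear_combination dLTDelta α γ ε m3 p3 * h.dLTNum_sub_dLTNum
    + dLTNum α γ ε m1 m2 m3 p1 p2 * hΔ - ε ^ 2 * γ * h.dLTDelta_mul_wronskian_add_dLTNum_mul_eq_zero

end IsDLTStep

end

/-- Discrete Wronskian relation and conserved quantity `b₃` for the
Hirota–Kimura discretization dLT of the Lagrange top. -/
theorem dLT_Wronskian_and_b3
    (α γ ε m1 m2 m3 p1 p2 p3 mt1 mt2 mt3 pt1 pt2 pt3 : ℝ)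
    (hm1 : mt1 - m1 = ε * (α - 1) * (mt2 * m3 + m2 * mt3) + ε * γ * (p2 + pt2))
    (hm2 : mt2 - m2 = ε * (1 - α) * (mt1 * m3 + m1 * mt3) - ε * γ * (p1 + pt1))
    (hm3 : mt3 = m3)
    (hp1 : pt1 - p1 = ε * α * (p2 * mt3 + pt2 * m3) - ε * (p3 * mt2 + pt3 * m2))
    (hp2 : pt2 - p2 = ε * (p3 * mt1 + pt3 * m1) - ε * α * (p1 * mt3 + pt1 * m3))
    (hp3 : pt3 - p3 = ε * (p1 * mt2 + pt1 * m2 - p2 * mt1 - pt2 * m1))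
    (hm3ne : m3 ≠ 0)
    (hΔ : 1 + ε ^ 2 * α * (1 - α) * m3 ^ 2 - ε ^ 2 * γ * p3 ≠ 0)
    (hΔt : 1 + ε ^ 2 * α * (1 - α) * m3 ^ 2 - ε ^ 2 * γ * pt3 ≠ 0) :
    (mt1 * p1 - m1 * pt1) + (mt2 * p2 - m2 * pt2)
        + dLTb3 α γ ε m1 m2 m3 p1 p2 p3 * (mt3 * p3 - m3 * pt3) = 0 ∧
    dLTb3 α γ ε mt1 mt2 mt3 pt1 pt2 pt3 = dLTb3 α γ ε m1 m2 m3 p1 p2 p3 := by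
  have h : IsDLTStep α γ ε m1 m2 m3 p1 p2 p3 mt1 mt2 mt3 pt1 pt2 pt3 :=
    ⟨hm1, hm2, hm3, hp1, hp2, hp3⟩
  change dLTDelta α γ ε m3 p3 ≠ 0 at hΔ
  change dLTDelta α γ ε m3 pt3 ≠ 0 at hΔt
  simp only [dLTb3_eq_dLTNum_div, hm3]
  constructor
  · field_simp
    linear_combination h.dLTDelta_mul_wronskian_add_dLTNum_mul_eq_zero
  · have hconserved := h.dLTNum_mul_dLTDelta_eq
    rw [hm3] at hconserved
    rw [div_eq_div_iff (mul_ne_zero hm3ne hΔt) (mul_ne_zero hm3ne hΔ)]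
    linear_combination m3 * hconserved
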